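/- arXiv:2002.11916 — 7 statements merged into one kernel-verified Lean document; each statement's English description precedes it below -/
import Mathlib

section
/- Let L : ℝ^p → ℝ be convex and differentiable, and define the score s(θ) = -∇L(θ). If θ̂ minimizes θ ↦ L(θ) + r‖θ‖₂² for some r ≥ 0, then θ̂ also minimizes θ ↦ L(θ) + λ‖θ‖₂ with λ = 2r‖θ̂‖₂. -/
/-!
The first-order condition of the ridge problem identifies the score at `θ̂`: `∇L(θ̂) = -2rθ̂`.
The gradient inequality for the convex function `L` then gives
`L θ ≥ L θ̂ + 2r (‖θ̂‖² - ⟪θ̂, θ⟫)`, and Cauchy–Schwarz (using `r ≥ 0`) bounds `⟪θ̂, θ⟫` by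
`‖θ̂‖ ‖θ‖`.
-/

open scoped RealInnerProductSpace

section GradientInequality

variable {E : Type*} [NormedAddCommGroup E] [NormedSpace ℝ E]

theorem ConvexOn.apply_sub_le_sub_of_hasFDerivAt {s : Set E} {f : E → ℝ} {f' : E →L[ℝ] ℝ}
    {x y : E} (hf : ConvexOn ℝ s f) (hx : x ∈ s) (hy : y ∈ s) (hf' : HasFDerivAt f f' x) :
    f' (y - x) ≤ f y - f x := by
  let γ : ℝ →ᵃ[ℝ] E := AffineMap.lineMap x y
  have hγ : ConvexOn ℝ (γ ⁻¹' s) (f ∘ γ) := hf.comp_affineMap γ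
  have hderiv : HasDerivAt (f ∘ γ) (f' (y - x)) 0 :=
    (by simpa [γ] using hf' : HasFDerivAt f f' (γ 0)).comp_hasDerivAt 0
      AffineMap.hasDerivAt_lineMap
  have hslope := hγ.le_slope_of_hasDerivAt (by simpa [γ]) (by simpa [γ]) one_pos hderiv
  simpa [slope, γ] using hslope

end GradientInequality

section Ridge

variable {F : Type*} [NormedAddCommGroup F] [InnerProductSpace ℝ F]

theorem hasFDerivAt_eq_of_isLocalMin_add_mul_norm_sq {L : F → ℝ} {L' : F →L[ℝ] ℝ} {r : ℝ}
    {θ : F} (hmin : IsLocalMin (fun x => L x + r * ‖x‖ ^ 2) θ) (hL : HasFDerivAt L L' θ) :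
    L' = -(2 * r) • innerSL ℝ θ := by
  have hzero := hmin.hasFDerivAt_eq_zero
    (hL.add ((hasStrictFDerivAt_norm_sq θ).hasFDerivAt.const_smul r))
  rw [add_eq_zero_iff_eq_neg] at hzero
  rw [hzero]
  module

end Ridge

theorem ridge_implies_edr
    (p : ℕ) (L : EuclideanSpace ℝ (Fin p) → ℝ)
    (hconv : ConvexOn ℝ Set.univ L) (hdiff : Differentiable ℝ L)
    (r : ℝ) (hr : 0 ≤ r) (θhat : EuclideanSpace ℝ (Fin p))
    (hmin : ∀ θ, L θhat + r * ‖θhat‖ ^ 2 ≤ L θ + r * ‖θ‖ ^ 2) :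
    ∀ θ, L θhat + (2 * r * ‖θhat‖) * ‖θhat‖ ≤ L θ + (2 * r * ‖θhat‖) * ‖θ‖ := by
  intro θ
  have hL := (hdiff θhat).hasFDerivAt
  have hscore : fderiv ℝ L θhat = -(2 * r) • innerSL ℝ θhat :=
    hasFDerivAt_eq_of_isLocalMin_add_mul_norm_sq
      (IsMinOn.isLocalMin (fun x _ => hmin x) Filter.univ_mem) hL
  have hgrad := hconv.apply_sub_le_sub_of_hasFDerivAt (Set.mem_univ θhat) (Set.mem_univ θ) hL
  rw [hscore] at hgrad
  simp only [smul_apply, innerSL_apply_apply, inner_sub_right, real_inner_self_eq_norm_sq,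
    smul_eq_mul] at hgrad
  have hcs : r * ⟪θhat, θ⟫ ≤ r * (‖θhat‖ * ‖θ‖) :=
    mul_le_mul_of_nonneg_left (real_inner_le_norm θhat θ) hr
  linarith
end

section
/- Let L : ℝ^p → ℝ be convex and differentiable. If θ̂ ≠ 0 minimizes θ ↦ L(θ) + λ‖θ‖₂ for some λ ≥ 0, then θ̂ also minimizes θ ↦ L(θ) + r‖θ‖₂² with r = λ/(2‖θ̂‖₂). -/
/-! With `a = ‖θ̂‖` and `r = λ / (2a)`, the parabola `t ↦ r t²` has slope `λ` at `a`, so it lies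
above its tangent `r a² + λ (t - a)`. Hence the ridge objective exceeds the penalized objective
`L θ + λ‖θ‖` by at least the constant `r a² - λ a`, with equality at `θ̂`, and `θ̂` minimizes both. -/

theorem mul_sub_le_div_mul_sq_sub {lam a : ℝ} (hlam : 0 ≤ lam) (ha : 0 < a) (b : ℝ) :
    lam * (b - a) ≤ lam / (2 * a) * (b ^ 2 - a ^ 2) := by
  have hgap : lam / (2 * a) * (b ^ 2 - a ^ 2) - lam * (b - a) = lam / (2 * a) * (b - a) ^ 2 := by
    field_simp
    ring
  have : 0 ≤ lam / (2 * a) * (b - a) ^ 2 := by positivity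
  linarith

theorem forall_add_div_mul_sq_le_of_forall_add_mul_le {α : Type*} {f g : α → ℝ} {lam : ℝ} {x : α}
    (hlam : 0 ≤ lam) (hx : 0 < g x) (hmin : ∀ y, f x + lam * g x ≤ f y + lam * g y) (y : α) :
    f x + lam / (2 * g x) * g x ^ 2 ≤ f y + lam / (2 * g x) * g y ^ 2 := by
  linarith [hmin y, mul_sub_le_div_mul_sq_sub hlam hx (g y)]

theorem edr_implies_ridge_general
    (p : ℕ) (L : EuclideanSpace ℝ (Fin p) → ℝ)
    (lam : ℝ) (hlam : 0 ≤ lam) (θhat : EuclideanSpace ℝ (Fin p)) (hne : θhat ≠ 0)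
    (hmin : ∀ θ, L θhat + lam * ‖θhat‖ ≤ L θ + lam * ‖θ‖) :
    ∀ θ, L θhat + (lam / (2 * ‖θhat‖)) * ‖θhat‖ ^ 2
      ≤ L θ + (lam / (2 * ‖θhat‖)) * ‖θ‖ ^ 2 :=
  forall_add_div_mul_sq_le_of_forall_add_mul_le (g := norm) hlam (norm_pos_iff.mpr hne) hmin

theorem edr_implies_ridge
    (p : ℕ) (L : EuclideanSpace ℝ (Fin p) → ℝ)
    (hconv : ConvexOn ℝ Set.univ L) (hdiff : Differentiable ℝ L)
    (lam : ℝ) (hlam : 0 ≤ lam) (θhat : EuclideanSpace ℝ (Fin p)) (hne : θhat ≠ 0)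
    (hmin : ∀ θ, L θhat + lam * ‖θhat‖ ≤ L θ + lam * ‖θ‖) :
    ∀ θ, L θhat + (lam / (2 * ‖θhat‖)) * ‖θhat‖ ^ 2
      ≤ L θ + (lam / (2 * ‖θhat‖)) * ‖θ‖ ^ 2 :=
  edr_implies_ridge_general p L lam hlam θhat hne hmin
end

section
/- Let L : ℝ^p → ℝ be convex and differentiable with score s(θ) = -∇L(θ), and suppose θ̂ minimizes the t-ridge objective θ ↦ L(θ)/‖s(θ)‖₂ + ‖θ‖₂ over the set where s(θ) ≠ 0. Set λ := ‖s(θ̂)‖₂. If θ̃ minimizes θ ↦ L(θ) + λ‖θ‖₂ and ‖s(θ̃)‖₂ = λ, then L(θ̂) + λ‖θ̂‖₂ = L(θ̃) + λ‖θ̃‖₂; in particular, if the edr objective L(θ) + λ‖θ‖₂ has a unique minimizer, then θ̂ = θ̃. -/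
/-!
Since `‖s θ̃‖ = λ`, the t-ridge objective at `θ̃` is the edr objective at `θ̃` divided by `λ`, while
at `θ̂` the same holds by definition of `λ`. Minimality of `θ̂` for t-ridge therefore gives
`edr θ̂ ≤ edr θ̃`, and minimality of `θ̃` for edr gives the reverse inequality.
-/

theorem div_add_le_div_add_iff {a b x y c : ℝ} (hc : 0 < c) :
    a / c + x ≤ b / c + y ↔ a + c * x ≤ b + c * y := by
  rw [← mul_le_mul_iff_right₀ hc, mul_add, mul_add, mul_div_cancel₀ _ hc.ne',
    mul_div_cancel₀ _ hc.ne']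

theorem tridge_on_edr_path_general
    (p : ℕ) (L : EuclideanSpace ℝ (Fin p) → ℝ)
    (s : EuclideanSpace ℝ (Fin p) → EuclideanSpace ℝ (Fin p))
    (θhat : EuclideanSpace ℝ (Fin p)) (hshat : s θhat ≠ 0)
    (hmin : ∀ θ, s θ ≠ 0 → L θhat / ‖s θhat‖ + ‖θhat‖ ≤ L θ / ‖s θ‖ + ‖θ‖)
    (lam : ℝ) (hlamdef : lam = ‖s θhat‖)
    (θtil : EuclideanSpace ℝ (Fin p))
    (hedr : ∀ θ, L θtil + lam * ‖θtil‖ ≤ L θ + lam * ‖θ‖)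
    (hstil : ‖s θtil‖ = lam) :
    L θhat + lam * ‖θhat‖ = L θtil + lam * ‖θtil‖ ∧
      ((∀ a b : EuclideanSpace ℝ (Fin p),
          (∀ θ, L a + lam * ‖a‖ ≤ L θ + lam * ‖θ‖) →
          (∀ θ, L b + lam * ‖b‖ ≤ L θ + lam * ‖θ‖) → a = b) → θhat = θtil) := by
  have hlam : 0 < lam := hlamdef ▸ norm_pos_iff.mpr hshat
  have hstil_ne : s θtil ≠ 0 := norm_ne_zero_iff.mp (hstil ▸ hlam.ne')
  have hle : L θhat + lam * ‖θhat‖ ≤ L θtil + lam * ‖θtil‖ := by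
    have htridge := hmin θtil hstil_ne
    rw [← hlamdef, hstil] at htridge
    exact (div_add_le_div_add_iff hlam).mp htridge
  have heq := le_antisymm hle (hedr θhat)
  exact ⟨heq, fun huniq => huniq θhat θtil (fun θ => heq ▸ hedr θ) hedr⟩

theorem tridge_on_edr_path
    (p : ℕ) (L : EuclideanSpace ℝ (Fin p) → ℝ)
    (hconv : ConvexOn ℝ Set.univ L) (hdiff : Differentiable ℝ L)
    (s : EuclideanSpace ℝ (Fin p) → EuclideanSpace ℝ (Fin p))
    (hs : ∀ θ, s θ = -(gradient L θ))
    (θhat : EuclideanSpace ℝ (Fin p)) (hshat : s θhat ≠ 0)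
    (hmin : ∀ θ, s θ ≠ 0 → L θhat / ‖s θhat‖ + ‖θhat‖ ≤ L θ / ‖s θ‖ + ‖θ‖)
    (lam : ℝ) (hlamdef : lam = ‖s θhat‖)
    (θtil : EuclideanSpace ℝ (Fin p))
    (hedr : ∀ θ, L θtil + lam * ‖θtil‖ ≤ L θ + lam * ‖θ‖)
    (hstil : ‖s θtil‖ = lam) :
    L θhat + lam * ‖θhat‖ = L θtil + lam * ‖θtil‖ ∧
      ((∀ a b : EuclideanSpace ℝ (Fin p),
          (∀ θ, L a + lam * ‖a‖ ≤ L θ + lam * ‖θ‖) →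
          (∀ θ, L b + lam * ‖b‖ ≤ L θ + lam * ‖θ‖) → a = b) → θhat = θtil) :=
  tridge_on_edr_path_general p L s θhat hshat hmin lam hlamdef θtil hedr hstil
end

section
/- Let L : ℝ^p → ℝ satisfy L(θ) > 0 for all θ, and let f(θ) = L(θ)/‖s(θ)‖₂ + ‖θ‖₂ be the t-ridge objective. Suppose θ' and θ'' are both global minimizers of f with λ' := ‖s(θ')‖₂ > 0 and λ'' := ‖s(θ'')‖₂ > 0, and suppose θ' minimizes θ ↦ L(θ) + λ'‖θ‖₂ and θ'' minimizes θ ↦ L(θ) + λ''‖θ‖₂. Then λ' = λ''. -/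
/-!
Both points minimize the t-ridge objective, so they share its value `m`, and `L θ = λ (m - ‖θ‖)` at
each of them. Testing the edr inequality of `θ'` at `θ''` then gives `(λ' - λ'') (m - ‖θ''‖) ≤ 0`, and
`m - ‖θ''‖ = L θ'' / λ'' > 0` forces `λ' ≤ λ''`; the symmetric argument gives `λ'' ≤ λ'`.
-/

theorem le_of_tRidge_le_of_edr_le {L₁ L₂ a₁ a₂ lam₁ lam₂ : ℝ}
    (hlam₁ : 0 < lam₁) (hlam₂ : 0 < lam₂) (hL₂ : 0 < L₂)
    (htridge : L₂ / lam₂ + a₂ ≤ L₁ / lam₁ + a₁)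
    (hedr : L₁ + lam₁ * a₁ ≤ L₂ + lam₁ * a₂) :
    lam₁ ≤ lam₂ := by
  have hscaled : lam₁ * (L₂ / lam₂) ≤ L₂ := by
    have := mul_le_mul_of_nonneg_left htridge hlam₁.le
    rw [mul_add, mul_add, mul_div_cancel₀ _ hlam₁.ne'] at this
    linarith
  rw [mul_div_assoc', div_le_iff₀ hlam₂, mul_comm] at hscaled
  exact le_of_mul_le_mul_left hscaled hL₂

theorem tridge_tuning_unique_general
    (p : ℕ) (L : EuclideanSpace ℝ (Fin p) → ℝ)
    (hLpos : ∀ θ, 0 < L θ)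
    (s : EuclideanSpace ℝ (Fin p) → EuclideanSpace ℝ (Fin p))
    (θ' θ'' : EuclideanSpace ℝ (Fin p))
    (lam' lam'' : ℝ)
    (hlam' : lam' = ‖s θ'‖) (hlam'' : lam'' = ‖s θ''‖)
    (hlam'pos : 0 < lam') (hlam''pos : 0 < lam'')
    (hmin' : ∀ θ, s θ ≠ 0 → L θ' / ‖s θ'‖ + ‖θ'‖ ≤ L θ / ‖s θ‖ + ‖θ‖)
    (hmin'' : ∀ θ, s θ ≠ 0 → L θ'' / ‖s θ''‖ + ‖θ''‖ ≤ L θ / ‖s θ‖ + ‖θ‖)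
    (hedr' : ∀ θ, L θ' + lam' * ‖θ'‖ ≤ L θ + lam' * ‖θ‖)
    (hedr'' : ∀ θ, L θ'' + lam'' * ‖θ''‖ ≤ L θ + lam'' * ‖θ‖) :
    lam' = lam'' := by
  have hs' : s θ' ≠ 0 := norm_ne_zero_iff.mp (hlam' ▸ hlam'pos.ne')
  have hs'' : s θ'' ≠ 0 := norm_ne_zero_iff.mp (hlam'' ▸ hlam''pos.ne')
  have htridge' := hmin' θ'' hs''
  have htridge'' := hmin'' θ' hs'
  rw [← hlam', ← hlam''] at htridge' htridge''
  exact le_antisymm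
    (le_of_tRidge_le_of_edr_le hlam'pos hlam''pos (hLpos θ'') htridge'' (hedr' θ''))
    (le_of_tRidge_le_of_edr_le hlam''pos hlam'pos (hLpos θ') htridge' (hedr'' θ'))

theorem tridge_tuning_unique
    (p : ℕ) (L : EuclideanSpace ℝ (Fin p) → ℝ)
    (hdiff : Differentiable ℝ L)
    (hLpos : ∀ θ, 0 < L θ)
    (s : EuclideanSpace ℝ (Fin p) → EuclideanSpace ℝ (Fin p))
    (hs : ∀ θ, s θ = -(gradient L θ))
    (θ' θ'' : EuclideanSpace ℝ (Fin p))
    (lam' lam'' : ℝ)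
    (hlam' : lam' = ‖s θ'‖) (hlam'' : lam'' = ‖s θ''‖)
    (hlam'pos : 0 < lam') (hlam''pos : 0 < lam'')
    (hmin' : ∀ θ, s θ ≠ 0 → L θ' / ‖s θ'‖ + ‖θ'‖ ≤ L θ / ‖s θ‖ + ‖θ‖)
    (hmin'' : ∀ θ, s θ ≠ 0 → L θ'' / ‖s θ''‖ + ‖θ''‖ ≤ L θ / ‖s θ‖ + ‖θ‖)
    (hedr' : ∀ θ, L θ' + lam' * ‖θ'‖ ≤ L θ + lam' * ‖θ‖)
    (hedr'' : ∀ θ, L θ'' + lam'' * ‖θ''‖ ≤ L θ + lam'' * ‖θ‖) :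
    lam' = lam'' :=
  tridge_tuning_unique_general p L hLpos s θ' θ'' lam' lam'' hlam' hlam'' hlam'pos hlam''pos hmin'
    hmin'' hedr' hedr''
end

section
/- In a generalized linear model with data (y, X) ∈ ℝⁿ × ℝ^{n×p}, let β̂ minimize β ↦ -∑ᵢ(yᵢ xᵢᵀβ - b(xᵢᵀβ)) + λ‖β‖₂ where b : ℝ → ℝ. Suppose the margin condition holds with constant C > 0: for each i, b(xᵢᵀβ̂) - b(xᵢᵀβ*) ≥ b'(xᵢᵀβ*)(xᵢᵀβ̂ - xᵢᵀβ*) + (1/C²)(xᵢᵀβ̂ - xᵢᵀβ*)². Write yᵢ = b'(xᵢᵀβ*) + εᵢ, and suppose λ ≥ ‖Xᵀε‖₂. Then ‖X(β̂ - β*)‖₂² ≤ 2C²λ‖β*‖₂. -/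
/-!
Comparing the penalized objective at `β̂` and at `β*` gives `ℓ(β̂) - ℓ(β*) ≥ λ (‖β̂‖ - ‖β*‖)` for
the log-likelihood `ℓ`. Writing `yᵢ = b'(xᵢᵀβ*) + εᵢ`, the margin condition bounds the same
difference above by `⟪Xᵀε, β̂ - β*⟫ - ‖X(β̂ - β*)‖² / C²`, and Cauchy–Schwarz with `λ ≥ ‖Xᵀε‖`
bounds the noise term by `λ (‖β̂‖ + ‖β*‖)`; the `‖β̂‖` terms cancel.
-/

open scoped RealInnerProductSpace

lemma loglik_gain_le_of_margin {b : ℝ → ℝ} {b' y ε t tstar κ : ℝ} (hy : y = b' + ε)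
    (hmargin : b t - b tstar ≥ b' * (t - tstar) + κ * (t - tstar) ^ 2) :
    y * t - b t - (y * tstar - b tstar) ≤ ε * (t - tstar) - κ * (t - tstar) ^ 2 := by
  subst hy
  linear_combination hmargin

theorem basic_inequality_of_norm_penalized_min {E : Type*} [NormedAddCommGroup E]
    [InnerProductSpace ℝ E] {L : E → ℝ} {g βhat βstar : E} {lam κ Q : ℝ} (hlam : ‖g‖ ≤ lam)
    (hmin : L βhat + lam * ‖βhat‖ ≤ L βstar + lam * ‖βstar‖)
    (hcurv : L βstar - L βhat ≤ ⟪g, βhat - βstar⟫ - κ * Q) :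
    κ * Q ≤ 2 * lam * ‖βstar‖ := by
  have hnoise : ⟪g, βhat - βstar⟫ ≤ lam * (‖βhat‖ + ‖βstar‖) :=
    calc ⟪g, βhat - βstar⟫ ≤ ‖g‖ * ‖βhat - βstar‖ := real_inner_le_norm _ _
      _ ≤ lam * (‖βhat‖ + ‖βstar‖) :=
        mul_le_mul hlam (norm_sub_le _ _) (norm_nonneg _) ((norm_nonneg _).trans hlam)
  linarith

theorem edr_glm_prediction_bound_general
    (n p : ℕ) (y : Fin n → ℝ) (X : Fin n → EuclideanSpace ℝ (Fin p))
    (b : ℝ → ℝ)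
    (βstar βhat : EuclideanSpace ℝ (Fin p))
    (lam C : ℝ) (hC : 0 < C)
    (ε : Fin n → ℝ)
    (hε : ∀ i, ε i = y i - deriv b ⟪X i, βstar⟫)
    (hmargin : ∀ i, b ⟪X i, βhat⟫ - b ⟪X i, βstar⟫ ≥
      deriv b ⟪X i, βstar⟫ * (⟪X i, βhat⟫ - ⟪X i, βstar⟫)
        + (1 / C ^ 2) * (⟪X i, βhat⟫ - ⟪X i, βstar⟫) ^ 2)
    (hlam : lam ≥ ‖∑ i, ε i • X i‖)
    (hmin : ∀ β : EuclideanSpace ℝ (Fin p),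
      -(∑ i, (y i * ⟪X i, βhat⟫ - b ⟪X i, βhat⟫)) + lam * ‖βhat‖
        ≤ -(∑ i, (y i * ⟪X i, β⟫ - b ⟪X i, β⟫)) + lam * ‖β‖) :
    ∑ i, (⟪X i, βhat⟫ - ⟪X i, βstar⟫) ^ 2 ≤ 2 * C ^ 2 * lam * ‖βstar‖ := by
  have hgain := fun i ↦ loglik_gain_le_of_margin (eq_add_of_sub_eq' (hε i).symm) (hmargin i)
  have hcurv : (∑ i, (y i * ⟪X i, βhat⟫ - b ⟪X i, βhat⟫))
      - ∑ i, (y i * ⟪X i, βstar⟫ - b ⟪X i, βstar⟫)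
      ≤ ⟪∑ i, ε i • X i, βhat - βstar⟫
        - 1 / C ^ 2 * ∑ i, (⟪X i, βhat⟫ - ⟪X i, βstar⟫) ^ 2 := by
    rw [sum_inner, Finset.mul_sum, ← Finset.sum_sub_distrib, ← Finset.sum_sub_distrib]
    refine Finset.sum_le_sum fun i _ ↦ ?_
    rw [real_inner_smul_left, inner_sub_right]
    exact hgain i
  have hbasic := basic_inequality_of_norm_penalized_min
    (L := fun β ↦ -∑ i, (y i * ⟪X i, β⟫ - b ⟪X i, β⟫)) hlam (hmin βstar)
    (κ := 1 / C ^ 2) (Q := ∑ i, (⟪X i, βhat⟫ - ⟪X i, βstar⟫) ^ 2) (by linarith)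
  rw [one_div_mul_eq_div, div_le_iff₀ (by positivity)] at hbasic
  linarith

theorem edr_glm_prediction_bound
    (n p : ℕ) (y : Fin n → ℝ) (X : Fin n → EuclideanSpace ℝ (Fin p))
    (b : ℝ → ℝ) (hb : Differentiable ℝ b)
    (βstar βhat : EuclideanSpace ℝ (Fin p))
    (lam C : ℝ) (hC : 0 < C)
    (ε : Fin n → ℝ)
    (hε : ∀ i, ε i = y i - deriv b ⟪X i, βstar⟫)
    (hmargin : ∀ i, b ⟪X i, βhat⟫ - b ⟪X i, βstar⟫ ≥
      deriv b ⟪X i, βstar⟫ * (⟪X i, βhat⟫ - ⟪X i, βstar⟫)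
        + (1 / C ^ 2) * (⟪X i, βhat⟫ - ⟪X i, βstar⟫) ^ 2)
    (hlam : lam ≥ ‖∑ i, ε i • X i‖)
    (hmin : ∀ β : EuclideanSpace ℝ (Fin p),
      -(∑ i, (y i * ⟪X i, βhat⟫ - b ⟪X i, βhat⟫)) + lam * ‖βhat‖
        ≤ -(∑ i, (y i * ⟪X i, β⟫ - b ⟪X i, β⟫)) + lam * ‖β‖) :
    ∑ i, (⟪X i, βhat⟫ - ⟪X i, βstar⟫) ^ 2 ≤ 2 * C ^ 2 * lam * ‖βstar‖ :=
  edr_glm_prediction_bound_general n p y X b βstar βhat lam C hC ε hε hmargin hlam hmin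
end

section
/- Let L : ℝ^p → ℝ be given, s(·) a function with ‖s(θ)‖₂ > 0 at the relevant points, and suppose β̂ minimizes θ ↦ L(θ)/‖s(θ)‖₂ + ‖θ‖₂ with λ̂ := ‖s(β̂)‖₂. Let β_λ* minimize θ ↦ L(θ) + λ*‖θ‖₂ for some λ* > 0, and suppose ‖s(β_λ*)‖₂ = λ* (score identity on the edr path). If L(β̂) > 0 then λ̂ ≥ λ*, and if L(β̂) < 0 then λ̂ ≤ λ*. -/
/-!
Evaluating the t-ridge optimality of `β̂` at `β_λ*`, where `‖s β_λ*‖ = λ*`, and dividing the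
edr optimality of `β_λ*` at `β̂` by `λ*`, the terms `L β_λ* / λ* + ‖β_λ*‖` cancel and leave
`L β̂ / λ̂ ≤ L β̂ / λ*`. The sign of `L β̂` then decides the order of `λ̂` and `λ*`.
-/

section OrderedField

variable {𝕜 : Type*} [Field 𝕜] [LinearOrder 𝕜] [IsStrictOrderedRing 𝕜]

theorem div_add_le_div_add_of_add_mul_le {a b c x y : 𝕜} (hc : 0 < c)
    (h : a + c * x ≤ b + c * y) : a / c + x ≤ b / c + y := by
  rw [div_add' _ _ _ hc.ne', div_add' _ _ _ hc.ne']
  exact div_le_div_of_nonneg_right (by linarith) hc.le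

theorem div_le_div_iff_of_neg_left {a b c : 𝕜} (ha : a < 0) (hb : 0 < b) (hc : 0 < c) :
    a / b ≤ a / c ↔ b ≤ c := by
  rw [← div_le_div_iff_of_pos_left (neg_pos.2 ha) hc hb, neg_div, neg_div, neg_le_neg_iff]

end OrderedField

theorem tridge_tuning_comparison_general
    (p : ℕ) (L : EuclideanSpace ℝ (Fin p) → ℝ)
    (s : EuclideanSpace ℝ (Fin p) → EuclideanSpace ℝ (Fin p))
    (βhat βlam : EuclideanSpace ℝ (Fin p))
    (hsβhat : ‖s βhat‖ > 0)
    (hmin : ∀ θ, s θ ≠ 0 → L βhat / ‖s βhat‖ + ‖βhat‖ ≤ L θ / ‖s θ‖ + ‖θ‖)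
    (lamhat lamstar : ℝ) (hlamhat : lamhat = ‖s βhat‖) (hlamstar : 0 < lamstar)
    (hedr : ∀ θ, L βlam + lamstar * ‖βlam‖ ≤ L θ + lamstar * ‖θ‖)
    (hscore : ‖s βlam‖ = lamstar) :
    (0 < L βhat → lamhat ≥ lamstar) ∧ (L βhat < 0 → lamhat ≤ lamstar) := by
  subst hlamhat
  have htridge := hmin βlam (norm_pos_iff.mp (hscore ▸ hlamstar))
  rw [hscore] at htridge
  have hedr_scaled := div_add_le_div_add_of_add_mul_le hlamstar (hedr βhat)
  have hkey : L βhat / ‖s βhat‖ ≤ L βhat / lamstar := by linarith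
  exact ⟨fun hL => (div_le_div_iff_of_pos_left hL hsβhat hlamstar).mp hkey,
    fun hL => (div_le_div_iff_of_neg_left hL hsβhat hlamstar).mp hkey⟩

theorem tridge_tuning_comparison
    (p : ℕ) (L : EuclideanSpace ℝ (Fin p) → ℝ)
    (s : EuclideanSpace ℝ (Fin p) → EuclideanSpace ℝ (Fin p))
    (βhat βlam : EuclideanSpace ℝ (Fin p))
    (hsβhat : ‖s βhat‖ > 0) (hsβlam : ‖s βlam‖ > 0)
    (hmin : ∀ θ, s θ ≠ 0 → L βhat / ‖s βhat‖ + ‖βhat‖ ≤ L θ / ‖s θ‖ + ‖θ‖)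
    (lamhat lamstar : ℝ) (hlamhat : lamhat = ‖s βhat‖) (hlamstar : 0 < lamstar)
    (hedr : ∀ θ, L βlam + lamstar * ‖βlam‖ ≤ L θ + lamstar * ‖θ‖)
    (hscore : ‖s βlam‖ = lamstar) :
    (0 < L βhat → lamhat ≥ lamstar) ∧ (L βhat < 0 → lamhat ≤ lamstar) :=
  tridge_tuning_comparison_general p L s βhat βlam hsβhat hmin lamhat lamstar hlamhat hlamstar hedr
    hscore
end

section
/- In linear regression, if β̂ minimizes β ↦ ‖y - Xβ‖₂² + λ‖β‖₂ with λ ≥ 2‖Xᵀε‖₂ where ε = y - Xβ*, then ‖X(β̂ - β*)‖₂² ≤ λ‖β*‖₂. -/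
/-!
Perturbing the minimiser `βhat` towards `βstar` along the segment and letting the step size go to
zero gives the first-order condition `2 ∑ rᵢ ⟪Xᵢ, βstar - βhat⟫ ≤ lam (‖βstar‖ - ‖βhat‖)` for the
residuals `rᵢ = yᵢ - ⟪Xᵢ, βhat⟫`. Writing `rᵢ = εᵢ - ⟪Xᵢ, βhat - βstar⟫` turns its left side into
twice the prediction error plus a noise term `2 ⟪∑ εᵢ Xᵢ, βstar - βhat⟫`, which Cauchy–Schwarz and
`lam ≥ 2 ‖∑ εᵢ Xᵢ‖` bound by `lam (‖βhat‖ + ‖βstar‖)`.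
-/

open Filter Topology Set
open scoped RealInnerProductSpace

theorem le_of_forall_le_add_mul {a b c : ℝ} (h : ∀ t ∈ Ioc (0 : ℝ) 1, a ≤ b + t * c) : a ≤ b := by
  have hlim : Tendsto (fun t : ℝ => b + t * c) (𝓝[>] 0) (𝓝 b) := by
    have : Tendsto (fun t : ℝ => b + t * c) (𝓝 0) (𝓝 (b + 0 * c)) :=
      (continuous_const.add (continuous_id.mul continuous_const)).tendsto 0
    simpa using this.mono_left nhdsWithin_le_nhds
  exact ge_of_tendsto hlim (eventually_of_mem (Ioc_mem_nhdsGT one_pos) h)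

section LeastSquares

variable {ι E : Type*} [Fintype ι] [NormedAddCommGroup E] [InnerProductSpace ℝ E]
  (X : ι → E) (y : ι → ℝ)

theorem sum_sq_residual_segment (u v : E) (t : ℝ) :
    ∑ i, (y i - ⟪X i, (1 - t) • u + t • v⟫) ^ 2
      = ∑ i, (y i - ⟪X i, u⟫) ^ 2 - t * (2 * ∑ i, (y i - ⟪X i, u⟫) * ⟪X i, v - u⟫)
        + t ^ 2 * ∑ i, ⟪X i, v - u⟫ ^ 2 := by
  simp only [Finset.mul_sum, ← Finset.sum_sub_distrib, ← Finset.sum_add_distrib]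
  refine Finset.sum_congr rfl fun i _ => ?_
  rw [inner_add_right, inner_smul_right, inner_smul_right, inner_sub_right]
  ring

theorem two_mul_sum_residual_mul_inner_le {pen : E → ℝ} (hpen : ConvexOn ℝ univ pen) {βhat : E}
    (hmin : ∀ β, ∑ i, (y i - ⟪X i, βhat⟫) ^ 2 + pen βhat ≤ ∑ i, (y i - ⟪X i, β⟫) ^ 2 + pen β)
    (β : E) :
    2 * ∑ i, (y i - ⟪X i, βhat⟫) * ⟪X i, β - βhat⟫ ≤ pen β - pen βhat := by
  refine le_of_forall_le_add_mul (c := ∑ i, ⟪X i, β - βhat⟫ ^ 2) fun t ⟨ht0, ht1⟩ => ?_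
  have hcomp := hmin ((1 - t) • βhat + t • β)
  have hconv : pen ((1 - t) • βhat + t • β) ≤ (1 - t) * pen βhat + t * pen β :=
    hpen.2 (mem_univ _) (mem_univ _) (by linarith) ht0.le (by ring)
  rw [sum_sq_residual_segment] at hcomp
  refine le_of_mul_le_mul_left ?_ ht0
  linarith

theorem abs_sum_mul_inner_le (ε : ι → ℝ) (v : E) :
    |∑ i, ε i * ⟪X i, v⟫| ≤ ‖∑ i, ε i • X i‖ * ‖v‖ := by
  simpa only [sum_inner, real_inner_smul_left] using abs_real_inner_le_norm (∑ i, ε i • X i) v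

end LeastSquares

theorem linreg_edr_prediction_bound
    (n p : ℕ) (y : Fin n → ℝ) (X : Fin n → EuclideanSpace ℝ (Fin p))
    (βstar βhat : EuclideanSpace ℝ (Fin p)) (lam : ℝ)
    (ε : Fin n → ℝ) (hε : ∀ i, ε i = y i - ⟪X i, βstar⟫)
    (hlam : lam ≥ 2 * ‖∑ i, ε i • X i‖)
    (hmin : ∀ β : EuclideanSpace ℝ (Fin p),
      (∑ i, (y i - ⟪X i, βhat⟫) ^ 2) + lam * ‖βhat‖
        ≤ (∑ i, (y i - ⟪X i, β⟫) ^ 2) + lam * ‖β‖) :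
    ∑ i, (⟪X i, βhat⟫ - ⟪X i, βstar⟫) ^ 2 ≤ lam * ‖βstar‖ := by
  have hlam0 : 0 ≤ lam := le_trans (by positivity) hlam
  have hfirst := two_mul_sum_residual_mul_inner_le X y
    ((convexOn_norm convex_univ).smul hlam0) hmin βstar
  have hsplit : ∑ i, (y i - ⟪X i, βhat⟫) * ⟪X i, βstar - βhat⟫
      = ∑ i, (⟪X i, βhat⟫ - ⟪X i, βstar⟫) ^ 2 + ∑ i, ε i * ⟪X i, βstar - βhat⟫ := by
    rw [← Finset.sum_add_distrib]
    refine Finset.sum_congr rfl fun i _ => ?_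
    rw [hε, inner_sub_right]
    ring
  have hnoise : |∑ i, ε i * ⟪X i, βstar - βhat⟫| ≤ lam / 2 * (‖βstar‖ + ‖βhat‖) :=
    (abs_sum_mul_inner_le X ε _).trans <|
      mul_le_mul (by linarith) (norm_sub_le _ _) (norm_nonneg _) (by linarith)
  simp only [smul_eq_mul] at hfirst
  linarith [neg_abs_le (∑ i, ε i * ⟪X i, βstar - βhat⟫)]
end
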